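/- For every nonnegative integer n and every nonnegative integer x: β_{n,q}(x) = ∑_{l=0}^{n} binom(n,l) · q^{l x} · β_{l,q} · [x]_q^{n−l}; that is, Carlitz's explicit formula for the q-Bernoulli polynomials agrees with the expansion of the q-Bernoulli polynomials in terms of the q-Bernoulli numbers. -/

import Mathlib

open Finset

/-- The `q`-number `[x]_q = (1 - q^x)/(1 - q)` of a nonnegative integer `x`. -/
noncomputable def qnum {K : Type*} [Field K] (q : K) (x : ℕ) : K :=
  (1 - q ^ x) / (1 - q)

/-- The Carlitz `q`-Bernoulli numbers
`β_{n,q} = (1-q)^{-n} ∑_{l=0}^{n} C(n,l) (-1)^l (l+1)/[l+1]_q`. -/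
noncomputable def carlitzBetaNum {K : Type*} [Field K] (q : K) (n : ℕ) : K :=
  ((1 - q) ^ n)⁻¹ * ∑ l ∈ Finset.range (n + 1),
    (n.choose l : K) * (-1) ^ l * ((l + 1 : ℕ) : K) / qnum q (l + 1)

/-- The Carlitz `q`-Bernoulli polynomials
`β_{n,q}(x) = (1-q)^{-n} ∑_{l=0}^{n} C(n,l) (-1)^l q^{lx} (l+1)/[l+1]_q`. -/
noncomputable def carlitzBeta {K : Type*} [Field K] (q : K) (n x : ℕ) : K :=
  ((1 - q) ^ n)⁻¹ * ∑ l ∈ Finset.range (n + 1),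
    (n.choose l : K) * (-1) ^ l * q ^ (l * x) * ((l + 1 : ℕ) : K) / qnum q (l + 1)

/-! With `a = q^x`, `u = (1-q)⁻¹` and `c_j = (-1)^j (j+1)/[j+1]_q`, the polynomial is
`β_{n,q}(x) = u^n ∑_j C(n,j) a^j c_j`, the number is `β_{l,q} = u^l ∑_j C(l,j) c_j`, and
`[x]_q = (1-a) u`. The powers of `u` on the right-hand side combine to `u^n`, and exchanging the
two sums leaves the binomial sums `∑_l C(n,l) C(l,j) a^l (1-a)^(n-l) = C(n,j) a^j (a + (1-a))^(n-j)`,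
which equal `C(n,j) a^j`. -/

section BinomialSums

variable {R : Type*} [CommSemiring R]

theorem sum_range_choose_mul_choose_mul_pow_mul_pow (a b : R) {n j : ℕ} (hj : j ≤ n) :
    ∑ l ∈ range (n + 1), (n.choose l * l.choose j : R) * a ^ l * b ^ (n - l)
      = n.choose j * a ^ j * (a + b) ^ (n - j) := by
  have hsplit : n + 1 = j + (n - j + 1) := by omega
  rw [add_pow, mul_sum, hsplit, sum_range_add]
  have hlow : ∑ l ∈ range j, (n.choose l * l.choose j : R) * a ^ l * b ^ (n - l) = 0 :=
    sum_eq_zero fun l hl => by simp [Nat.choose_eq_zero_of_lt (mem_range.mp hl)]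
  rw [hlow, zero_add]
  refine sum_congr rfl fun m hm => ?_
  have hm : m ≤ n - j := Nat.lt_succ_iff.mp (mem_range.mp hm)
  have hchoose : n.choose (j + m) * (j + m).choose j = n.choose j * (n - j).choose m := by
    simpa using Nat.choose_mul (n := n) (k := j + m) (s := j) (by omega)
  rw [← Nat.cast_mul, hchoose, Nat.cast_mul, show n - (j + m) = n - j - m by omega, pow_add]
  ring

theorem sum_range_choose_mul_pow_mul_sum_choose (f : ℕ → R) (a b : R) (n : ℕ) :
    ∑ l ∈ range (n + 1), n.choose l * a ^ l * (∑ j ∈ range (l + 1), l.choose j * f j) * b ^ (n - l)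
      = ∑ j ∈ range (n + 1), n.choose j * a ^ j * (a + b) ^ (n - j) * f j := by
  have hextend : ∀ l ∈ range (n + 1),
      ∑ j ∈ range (l + 1), (l.choose j : R) * f j = ∑ j ∈ range (n + 1), (l.choose j : R) * f j :=
    fun l hl => sum_subset (range_subset_range.mpr (mem_range.mp hl)) fun j _ hj => by
      simp [Nat.choose_eq_zero_of_lt (not_lt.mp (mt mem_range.mpr hj))]
  rw [sum_congr rfl fun l hl => by rw [hextend l hl]]
  simp only [mul_sum, sum_mul]
  rw [sum_comm]
  refine sum_congr rfl fun j hj => ?_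
  rw [← sum_range_choose_mul_choose_mul_pow_mul_pow a b (Nat.lt_succ_iff.mp (mem_range.mp hj)),
    sum_mul]
  exact sum_congr rfl fun l _ => by ring

end BinomialSums

section Carlitz

variable {K : Type*} [Field K]

noncomputable def carlitzCoeff (q : K) (j : ℕ) : K :=
  (-1) ^ j * ((j + 1 : ℕ) : K) / qnum q (j + 1)

theorem carlitzBetaNum_eq (q : K) (n : ℕ) :
    carlitzBetaNum q n
      = (1 - q)⁻¹ ^ n * ∑ j ∈ range (n + 1), n.choose j * carlitzCoeff q j := by
  rw [carlitzBetaNum, inv_pow]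
  congr 1
  exact sum_congr rfl fun j _ => by rw [carlitzCoeff]; ring

theorem carlitzBeta_eq (q : K) (n x : ℕ) :
    carlitzBeta q n x
      = (1 - q)⁻¹ ^ n * ∑ j ∈ range (n + 1), n.choose j * (q ^ x) ^ j * carlitzCoeff q j := by
  rw [carlitzBeta, inv_pow]
  congr 1
  exact sum_congr rfl fun j _ => by rw [carlitzCoeff, ← pow_mul, mul_comm x j]; ring

theorem qnum_eq (q : K) (x : ℕ) : qnum q x = (1 - q ^ x) * (1 - q)⁻¹ := div_eq_mul_inv _ _

end Carlitz

theorem stmt8_general {K : Type*} [Field K] (q : K) (n x : ℕ) :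
    carlitzBeta q n x
      = ∑ l ∈ Finset.range (n + 1),
          (n.choose l : K) * q ^ (l * x) * carlitzBetaNum q l * qnum q x ^ (n - l) := by
  have hterm : ∀ l ∈ range (n + 1),
      (n.choose l : K) * q ^ (l * x) * carlitzBetaNum q l * qnum q x ^ (n - l)
        = (1 - q)⁻¹ ^ n * (n.choose l * (q ^ x) ^ l
            * (∑ j ∈ range (l + 1), l.choose j * carlitzCoeff q j) * (1 - q ^ x) ^ (n - l)) := by
    intro l hl
    rw [carlitzBetaNum_eq, qnum_eq, mul_pow, mul_comm l x, pow_mul,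
      ← pow_mul_pow_sub (1 - q)⁻¹ (Nat.lt_succ_iff.mp (mem_range.mp hl))]
    ring
  rw [sum_congr rfl hterm, ← mul_sum, sum_range_choose_mul_pow_mul_sum_choose, carlitzBeta_eq]
  simp only [add_sub_cancel, one_pow, mul_one]

/-- For all nonnegative integers `n` and `x`,
`β_{n,q}(x) = ∑_{l=0}^{n} C(n,l) q^{lx} β_{l,q} [x]_q^{n-l}`. -/
theorem stmt8 {K : Type*} [Field K] [CharZero K] (q : K) (hq : q ≠ 1)
    (hq' : ∀ n : ℕ, 0 < n → q ^ n ≠ 1) (n x : ℕ) :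
    carlitzBeta q n x
      = ∑ l ∈ Finset.range (n + 1),
          (n.choose l : K) * q ^ (l * x) * carlitzBetaNum q l * qnum q x ^ (n - l) :=
  stmt8_general q n x
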